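/- Let P be a d×d substochastic matrix (nonnegative entries, row sums at most 1) such that I - P is invertible. Then the matrix R = I - Pᵗ is a completely-𝒮 matrix: every principal submatrix A of R admits a strictly positive vector v with Av > 0. -/

import Mathlib

/-!
The row sums `P ^ n *ᵥ 1` are nonincreasing in `n`. The states whose row sum stays `1` forever
form a class that `P` never leaves and on which `P` is stochastic, so the all-ones vector on that
class lies in the kernel of a diagonal block of the block-triangular matrix `1 - P`, against
invertibility. Hence some `P ^ N` has all row sums `< 1`, and so does `Q ^ N` for the restriction
`Q` of `P` to `s`, since `Q ^ N` is dominated by `P ^ N`. The powers of `Q ^ N` then tend to `0`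
in the `L^∞` operator norm, so some `Qᵀ ^ L` has all row sums `< 1`, and
`v = ∑ n < L, Qᵀ ^ n *ᵥ 1` works: `v ≥ 1` and `(1 - Qᵀ) *ᵥ v = 1 - Qᵀ ^ L *ᵥ 1 > 0`.
-/

open Matrix Filter Topology Finset

namespace Matrix

variable {ι κ : Type*} [Fintype κ]

lemma mulVec_one_apply (A : Matrix ι κ ℝ) (i : ι) : (A *ᵥ 1) i = ∑ j, A i j := by
  simp [mulVec, dotProduct_one]

lemma mulVec_mono {A : Matrix ι κ ℝ} (hA : ∀ i j, 0 ≤ A i j) {x y : κ → ℝ}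
    (hxy : x ≤ y) : A *ᵥ x ≤ A *ᵥ y := fun i =>
  sum_le_sum fun j _ => mul_le_mul_of_nonneg_left (hxy j) (hA i j)

variable [Fintype ι] [DecidableEq ι] {P : Matrix ι ι ℝ}

lemma pow_mulVec_one_nonneg (hP : ∀ i j, 0 ≤ P i j) (n : ℕ) : 0 ≤ P ^ n *ᵥ 1 := by
  intro i
  simpa [mulVec_one_apply] using sum_nonneg fun j _ => pow_apply_nonneg hP n i j

lemma antitone_pow_mulVec_one (hP : ∀ i j, 0 ≤ P i j) (hrow : P *ᵥ 1 ≤ 1) :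
    Antitone fun n : ℕ => P ^ n *ᵥ 1 := by
  refine antitone_nat_of_succ_le fun n => ?_
  rw [pow_succ, ← mulVec_mulVec]
  exact mulVec_mono (pow_apply_nonneg hP n) hrow

lemma pow_mulVec_one_le_one (hP : ∀ i j, 0 ≤ P i j) (hrow : P *ᵥ 1 ≤ 1) (n : ℕ) :
    P ^ n *ᵥ 1 ≤ 1 := by
  simpa using antitone_pow_mulVec_one hP hrow (Nat.zero_le n)

lemma pow_succ_mulVec_one_lt_one (hP : ∀ i j, 0 ≤ P i j) (hrow : P *ᵥ 1 ≤ 1) {i j : ι}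
    {m : ℕ} (hij : 0 < P i j) (hj : (P ^ m *ᵥ 1) j < 1) : (P ^ (m + 1) *ᵥ 1) i < 1 := by
  rw [pow_succ', ← mulVec_mulVec]
  calc (P *ᵥ (P ^ m *ᵥ 1)) i < (P *ᵥ 1) i :=
        sum_lt_sum
          (fun k _ => mul_le_mul_of_nonneg_left (pow_mulVec_one_le_one hP hrow m k) (hP i k))
          ⟨j, mem_univ j, mul_lt_mul_of_pos_left hj hij⟩
    _ ≤ 1 := hrow i

lemma det_one_sub_eq_zero_of_closed (p : ι → Prop) [DecidablePred p] (hp : ∃ i, p i)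
    (hclosed : ∀ i, p i → ∀ j, ¬p j → P i j = 0) (hrow : ∀ i, p i → ∑ j, P i j = 1) :
    (1 - P).det = 0 := by
  have hblock : ∀ i, p i → ∀ j, ¬p j → (1 - P) i j = 0 := fun i hi j hj => by
    simp [one_apply_ne fun h : i = j => hj (h ▸ hi), hclosed i hi j hj]
  rw [twoBlockTriangular_det' (1 - P) p hblock]
  refine mul_eq_zero_of_left ?_ _
  rw [← exists_mulVec_eq_zero_iff]
  obtain ⟨i₀, hi₀⟩ := hp
  refine ⟨1, fun h => by simpa using congrFun h ⟨i₀, hi₀⟩, funext fun i => ?_⟩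
  have hsum := Fintype.sum_subtype_add_sum_subtype p fun j => (1 - P) i j
  rw [sum_eq_zero fun (j : {j // ¬p j}) _ => hblock i i.2 j j.2, add_zero] at hsum
  change ∑ j : {a // p a}, (1 - P) i j * 1 = 0
  simp only [mul_one]
  rw [hsum]
  simp [sum_sub_distrib, hrow i i.2, one_apply]

lemma exists_pow_mulVec_one_lt_one (hP : ∀ i j, 0 ≤ P i j) (hrow : P *ᵥ 1 ≤ 1)
    (hdet : (1 - P).det ≠ 0) : ∃ N, ∀ i, (P ^ N *ᵥ 1) i < 1 := by
  have hleak : ∀ i, ∃ n, (P ^ n *ᵥ 1) i < 1 := by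
    by_contra! h
    classical
    refine hdet (det_one_sub_eq_zero_of_closed (fun i => ∀ n, (P ^ n *ᵥ 1) i = 1) ?_ ?_ ?_)
    · obtain ⟨i, hi⟩ := h
      exact ⟨i, fun n => le_antisymm (pow_mulVec_one_le_one hP hrow n i) (hi n)⟩
    · intro i hi j hj
      obtain ⟨m, hm⟩ := not_forall.1 hj
      by_contra hij
      exact (pow_succ_mulVec_one_lt_one hP hrow ((hP i j).lt_of_ne' hij)
        ((pow_mulVec_one_le_one hP hrow m j).lt_of_ne hm)).ne (hi (m + 1))
    · intro i hi
      simpa [mulVec_one_apply] using hi 1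
  choose n hn using hleak
  exact ⟨univ.sup n, fun i =>
    (antitone_pow_mulVec_one hP hrow (le_sup (mem_univ i)) i).trans_lt (hn i)⟩

lemma tendsto_pow_atTop_nhds_zero_of_mulVec_one_lt_one {B : Matrix ι ι ℝ}
    (hB : ∀ i j, 0 ≤ B i j) (hrow : ∀ i, (B *ᵥ 1) i < 1) :
    Tendsto (B ^ ·) atTop (𝓝 0) := by
  open scoped Matrix.Norms.Operator in
  refine tendsto_pow_atTop_nhds_zero_of_norm_lt_one ?_
  rw [linfty_opNorm_def, NNReal.coe_lt_one, Finset.sup_lt_iff one_pos]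
  intro i _
  rw [← NNReal.coe_lt_one, NNReal.coe_sum]
  simpa [Real.norm_of_nonneg (hB i _), mulVec_one_apply] using hrow i

lemma exists_pos_one_sub_mulVec_pos_of_pow {A : Matrix ι ι ℝ} (hA : ∀ i j, 0 ≤ A i j)
    {L : ℕ} (hL : ∀ i, (A ^ L *ᵥ 1) i < 1) :
    ∃ v, (∀ i, 0 < v i) ∧ ∀ i, 0 < ((1 - A) *ᵥ v) i := by
  refine ⟨(∑ n ∈ range L, A ^ n) *ᵥ 1, fun i => ?_, fun i => ?_⟩
  · have hL0 : 0 ∈ range L := mem_range.2 (Nat.pos_of_ne_zero fun h => by simpa [h] using hL i)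
    rw [sum_mulVec, Finset.sum_apply]
    calc (0 : ℝ) < (A ^ 0 *ᵥ 1) i := by simp
      _ ≤ _ := single_le_sum (fun n _ => pow_mulVec_one_nonneg hA n i) hL0
  · rw [mulVec_mulVec, mul_neg_geom_sum, sub_mulVec, one_mulVec]
    simpa using hL i

lemma exists_pos_one_sub_transpose_mulVec_pos {Q : Matrix ι ι ℝ} (hQ : ∀ i j, 0 ≤ Q i j)
    {N : ℕ} (hN : ∀ i, (Q ^ N *ᵥ 1) i < 1) :
    ∃ v, (∀ i, 0 < v i) ∧ ∀ i, 0 < ((1 - Qᵀ) *ᵥ v) i := by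
  have hcol : Tendsto (fun k => ((Q ^ N) ^ k)ᵀ *ᵥ 1) atTop (𝓝 0) := by
    simpa only [Function.comp_def, id_eq, transpose_zero, zero_mulVec] using
      ((continuous_id.matrix_transpose.matrix_mulVec (continuous_const (y := 1))).tendsto 0).comp
      (tendsto_pow_atTop_nhds_zero_of_mulVec_one_lt_one (pow_apply_nonneg hQ N) hN)
  obtain ⟨k, hk⟩ := (eventually_all.2 fun i =>
    (tendsto_pi_nhds.1 hcol i).eventually_lt_const zero_lt_one).exists
  refine exists_pos_one_sub_mulVec_pos_of_pow (L := N * k) (fun i j => hQ j i) fun i => ?_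
  simpa [transpose_pow, pow_mul] using hk i

lemma submatrix_pow_mulVec_one_le (hP : ∀ i j, 0 ≤ P i j) (s : Finset ι) (n : ℕ) (i : s) :
    ((P.submatrix (↑) (↑) : Matrix s s ℝ) ^ n *ᵥ 1) i ≤ (P ^ n *ᵥ 1) i := by
  induction n generalizing i with
  | zero => simp
  | succ n ih =>
    rw [pow_succ', ← mulVec_mulVec, pow_succ', ← mulVec_mulVec]
    calc ∑ k : s, P i k * ((P.submatrix (↑) (↑) : Matrix s s ℝ) ^ n *ᵥ 1) k
        ≤ ∑ k : s, P i k * (P ^ n *ᵥ 1) k :=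
          sum_le_sum fun k _ => mul_le_mul_of_nonneg_left (ih k) (hP i k)
      _ = ∑ j ∈ s, P i j * (P ^ n *ᵥ 1) j := sum_coe_sort s fun j => P i j * (P ^ n *ᵥ 1) j
      _ ≤ ∑ j, P i j * (P ^ n *ᵥ 1) j :=
          sum_le_univ_sum_of_nonneg fun j => mul_nonneg (hP i j) (pow_mulVec_one_nonneg hP n j)

end Matrix

/-- If `P` is a `d×d` substochastic matrix (nonnegative entries, row sums at most `1`)
with `I - P` invertible, then `R = I - Pᵗ` is a completely-𝒮 matrix: every principal
submatrix `A` of `R` admits a strictly positive vector `v` with `A v > 0` entrywise. -/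
theorem stmt1 {d : ℕ} (P : Matrix (Fin d) (Fin d) ℝ)
    (hnn : ∀ i j, 0 ≤ P i j)
    (hrow : ∀ i, ∑ j, P i j ≤ 1)
    (hinv : IsUnit (1 - P)) :
    ∀ s : Finset (Fin d), s.Nonempty →
      ∃ v : {x // x ∈ s} → ℝ, (∀ i, 0 < v i) ∧
        ∀ i : {x // x ∈ s},
          0 < (((1 - Pᵀ).submatrix (fun i : {x // x ∈ s} => (i : Fin d))
                (fun j : {x // x ∈ s} => (j : Fin d))).mulVec v) i := by
  intro s _
  have hrowsum : P *ᵥ 1 ≤ 1 := fun i => by simpa [mulVec_one_apply] using hrow i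
  have hdet : (1 - P).det ≠ 0 := ((isUnit_iff_isUnit_det _).1 hinv).ne_zero
  obtain ⟨N, hN⟩ := exists_pow_mulVec_one_lt_one hnn hrowsum hdet
  have hsub : (1 - Pᵀ).submatrix (fun i : s => (i : Fin d)) (fun j : s => (j : Fin d)) =
      1 - (P.submatrix (↑) (↑) : Matrix s s ℝ)ᵀ := by
    rw [← submatrix_one _ Subtype.val_injective, transpose_submatrix]
    rfl
  rw [hsub]
  exact exists_pos_one_sub_transpose_mulVec_pos (fun i j => hnn i j)
    fun i => (submatrix_pow_mulVec_one_le hnn s N i).trans_lt (hN i)
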